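/- Let S be a nonempty multiplicatively closed subset of a commutative semiring R, and let P be a k-ideal of R that is maximal, with respect to inclusion, among all k-ideals of R disjoint from S. Then P is a k-prime ideal of R. -/

import Mathlib

/-!
The k-closure `{x | ∃ a ∈ A, x + a ∈ A}` of an ideal `A` is the smallest k-ideal containing `A`,
and the product of k-closures lies in the k-closure of the product. If `I * J ≤ P` with
`I, J ⊄ P`, maximality of `P` forces the k-closures of `P ⊔ I` and `P ⊔ J` to meet `S`, say in
`s` and `t`. Then `s * t` lies in the k-closure of `(P ⊔ I) * (P ⊔ J) ≤ P`, which is `P` itself,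
contradicting `P ∩ S = ∅`.
-/

variable {R : Type*} [CommSemiring R]

/-- An ideal `I` of a commutative semiring is a *k-ideal* (subtractive ideal) if
`a ∈ I` and `a + b ∈ I` imply `b ∈ I`. -/
def IsKIdeal (I : Ideal R) : Prop :=
  ∀ a b : R, a ∈ I → a + b ∈ I → b ∈ I

/-- A *k-prime* ideal: a proper k-ideal `P` such that for all k-ideals `I`, `J`,
`I * J ≤ P` implies `I ≤ P` or `J ≤ P`. -/
def IsKPrime (P : Ideal R) : Prop :=
  IsKIdeal P ∧ P ≠ ⊤ ∧
    ∀ I J : Ideal R, IsKIdeal I → IsKIdeal J → I * J ≤ P → I ≤ P ∨ J ≤ P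

def kClosure (A : Ideal R) : Ideal R where
  carrier := {x | ∃ a ∈ A, x + a ∈ A}
  zero_mem' := ⟨0, A.zero_mem, by simp⟩
  add_mem' := by
    rintro x y ⟨a, ha, hxa⟩ ⟨b, hb, hyb⟩
    refine ⟨a + b, A.add_mem ha hb, ?_⟩
    rw [add_add_add_comm]
    exact A.add_mem hxa hyb
  smul_mem' := by
    rintro r x ⟨a, ha, hxa⟩
    refine ⟨r * a, A.mul_mem_left r ha, ?_⟩
    rw [smul_eq_mul, ← mul_add]
    exact A.mul_mem_left r hxa

theorem le_kClosure (A : Ideal R) : A ≤ kClosure A :=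
  fun x hx => ⟨x, hx, A.add_mem hx hx⟩

theorem isKIdeal_kClosure (A : Ideal R) : IsKIdeal (kClosure A) := by
  rintro x y ⟨a, ha, hxa⟩ ⟨b, hb, hxyb⟩
  refine ⟨x + a + b, A.add_mem hxa hb, ?_⟩
  have : y + (x + a + b) = (x + y + b) + a := by ring
  rw [this]
  exact A.add_mem hxyb ha

theorem kClosure_le_of_isKIdeal {A B : Ideal R} (hB : IsKIdeal B) (h : A ≤ B) :
    kClosure A ≤ B := by
  rintro x ⟨a, ha, hxa⟩
  exact hB a x (h ha) (by rw [add_comm]; exact h hxa)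

theorem mul_mem_kClosure_mul {A B : Ideal R} {x y : R} (hx : x ∈ kClosure A)
    (hy : y ∈ kClosure B) : x * y ∈ kClosure (A * B) := by
  obtain ⟨a, ha, hxa⟩ := hx
  obtain ⟨b, hb, hyb⟩ := hy
  refine ⟨(x + a) * b + a * (y + b),
    Ideal.add_mem _ (Ideal.mul_mem_mul hxa hb) (Ideal.mul_mem_mul ha hyb), ?_⟩
  have : x * y + ((x + a) * b + a * (y + b)) = (x + a) * (y + b) + a * b := by ring
  rw [this]
  exact Ideal.add_mem _ (Ideal.mul_mem_mul hxa hyb) (Ideal.mul_mem_mul ha hb)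

theorem sup_mul_sup_le_of_mul_le {P I J : Ideal R} (h : I * J ≤ P) :
    (P ⊔ I) * (P ⊔ J) ≤ P := by
  rw [Ideal.sup_mul, Ideal.mul_sup, Ideal.mul_sup]
  exact sup_le (sup_le Ideal.mul_le_right Ideal.mul_le_left) (sup_le Ideal.mul_le_right h)

theorem exists_mem_kClosure_sup_of_not_le {S : Set R} {P I : Ideal R}
    (hmax : ∀ Q : Ideal R, IsKIdeal Q → (Q : Set R) ∩ S = ∅ → P ≤ Q → P = Q)
    (hI : ¬I ≤ P) : ∃ s ∈ S, s ∈ kClosure (P ⊔ I) := by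
  by_contra! hc
  have hPQ : P = kClosure (P ⊔ I) :=
    hmax _ (isKIdeal_kClosure _) (Set.eq_empty_iff_forall_notMem.mpr fun x hx => hc x hx.2 hx.1)
      (le_sup_left.trans (le_kClosure _))
  exact hI ((le_sup_right.trans (le_kClosure _)).trans hPQ.ge)

/-- If `S` is a nonempty multiplicatively closed subset of `R` and `P` is a k-ideal
maximal among k-ideals disjoint from `S`, then `P` is k-prime. -/
theorem kPrime_of_maximal_disjoint (S : Set R) (hS : S.Nonempty)
    (hmul : ∀ a ∈ S, ∀ b ∈ S, a * b ∈ S)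
    (P : Ideal R) (hP : IsKIdeal P) (hdisj : (P : Set R) ∩ S = ∅)
    (hmax : ∀ Q : Ideal R, IsKIdeal Q → (Q : Set R) ∩ S = ∅ → P ≤ Q → P = Q) :
    IsKPrime P := by
  have hPS : ∀ x ∈ P, x ∉ S := fun x hx hxS =>
    Set.eq_empty_iff_forall_notMem.mp hdisj x ⟨hx, hxS⟩
  refine ⟨hP, fun htop => ?_, fun I J _ _ hIJ => ?_⟩
  · obtain ⟨s, hs⟩ := hS
    exact hPS s (htop ▸ Submodule.mem_top) hs
  · by_contra! h
    obtain ⟨s, hsS, hs⟩ := exists_mem_kClosure_sup_of_not_le hmax h.1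
    obtain ⟨t, htS, ht⟩ := exists_mem_kClosure_sup_of_not_le hmax h.2
    have hst : s * t ∈ P :=
      kClosure_le_of_isKIdeal hP (sup_mul_sup_le_of_mul_le hIJ) (mul_mem_kClosure_mul hs ht)
    exact hPS _ hst (hmul s hsS t htS)
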